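/- Under the hypotheses of the effective-field construction (a(·,x) strongly monotone with constant λ and L-Lipschitz uniformly in x on a probability space (X,μ); correctors w_p ∈ L²(X;ℝ^d) with mean zero satisfying ∫_X (a(w_p+p)−a(w_q+q))·(w_p−w_q) dμ = 0 for all p,q; ā(p) = ∫_X a(w_p+p) dμ), the map ā is Lipschitz continuous: there is a constant C depending only on λ and L such that |ā(p)−ā(q)| ≤ C|p−q| for all p, q ∈ ℝ^d; moreover ‖w_p − w_q‖_{L²(X)} ≤ C|p−q|. -/

import Mathlib

/-!
Set `v = p - q`, `e = w_p - w_q`, `g = e + v` and `f = a(w_p + p) - a(w_q + q)`, so that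
`∫ f = ā(p) - ā(q)`. The corrector equation kills `∫ ⟪f, e⟫`, hence `∫ ⟪f, g⟫ = ⟪ā(p) - ā(q), v⟫`,
and since `e` has mean zero, `∫ ‖g‖² = ‖e‖²_{L²} + ‖v‖²`. Strong monotonicity bounds `λ ∫ ‖g‖²`
by `‖ā(p) - ā(q)‖ ‖v‖`, while the Lipschitz bound and Jensen give `‖ā(p) - ā(q)‖ ≤ L ‖g‖_{L²}`.
Absorbing one factor `‖g‖_{L²}` yields `‖g‖_{L²} ≤ (L / λ) ‖v‖`, which controls both
`‖e‖_{L²}` and `‖ā(p) - ā(q)‖`.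
-/

open MeasureTheory
open scoped InnerProductSpace

lemma le_div_mul_of_mul_sq_le {lam L S δ : ℝ} (hlam : 0 < lam) (hL : 0 ≤ L) (hS : 0 ≤ S)
    (hδ : 0 ≤ δ) (h : lam * S ^ 2 ≤ L * S * δ) : S ≤ L / lam * δ := by
  rw [div_mul_eq_mul_div, le_div_iff₀ hlam]
  rcases hS.eq_or_lt with rfl | hSpos
  · rw [zero_mul]; positivity
  · nlinarith

section

variable {X : Type*} [MeasurableSpace X] {μ : Measure X} {E : Type*} [NormedAddCommGroup E]

lemma sq_integral_le_integral_sq [IsProbabilityMeasure μ] {h : X → ℝ} (hh : MemLp h 2 μ) :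
    (∫ x, h x ∂μ) ^ 2 ≤ ∫ x, h x ^ 2 ∂μ := by
  have := ProbabilityTheory.variance_nonneg h μ
  rw [ProbabilityTheory.variance_eq_sub hh] at this
  simpa using this

lemma integral_norm_le_sqrt_integral_norm_sq [IsProbabilityMeasure μ] {g : X → E}
    (hg : MemLp g 2 μ) : ∫ x, ‖g x‖ ∂μ ≤ √(∫ x, ‖g x‖ ^ 2 ∂μ) :=
  (Real.le_sqrt (integral_nonneg fun _ => norm_nonneg _)
    (integral_nonneg fun _ => sq_nonneg _)).2 (sq_integral_le_integral_sq hg.norm)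

variable [InnerProductSpace ℝ E]

lemma integrable_inner_of_norm_le {f g : X → E} {L : ℝ} (hf : AEStronglyMeasurable f μ)
    (hg : MemLp g 2 μ) (hfg : ∀ x, ‖f x‖ ≤ L * ‖g x‖) :
    Integrable (fun x => ⟪f x, g x⟫_ℝ) μ := by
  refine (hg.norm.integrable_sq.const_mul L).mono' (hf.inner hg.aestronglyMeasurable)
    (Filter.Eventually.of_forall fun x => ?_)
  calc ‖⟪f x, g x⟫_ℝ‖ ≤ ‖f x‖ * ‖g x‖ := norm_inner_le_norm _ _
    _ ≤ L * ‖g x‖ * ‖g x‖ := by gcongr; exact hfg x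
    _ = L * ‖g x‖ ^ 2 := by ring

lemma norm_integral_le_mul_sqrt_integral_norm_sq [IsProbabilityMeasure μ] {f g : X → E} {L : ℝ}
    (hL : 0 ≤ L) (hf : Integrable f μ) (hg : MemLp g 2 μ) (hfg : ∀ x, ‖f x‖ ≤ L * ‖g x‖) :
    ‖∫ x, f x ∂μ‖ ≤ L * √(∫ x, ‖g x‖ ^ 2 ∂μ) :=
  calc ‖∫ x, f x ∂μ‖ ≤ ∫ x, ‖f x‖ ∂μ := norm_integral_le_integral_norm _
    _ ≤ ∫ x, L * ‖g x‖ ∂μ := integral_mono hf.norm ((hg.integrable one_le_two).norm.const_mul L) hfg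
    _ = L * ∫ x, ‖g x‖ ∂μ := integral_const_mul _ _
    _ ≤ L * √(∫ x, ‖g x‖ ^ 2 ∂μ) := by gcongr; exact integral_norm_le_sqrt_integral_norm_sq hg

lemma sqrt_integral_norm_sq_le_of_strongly_monotone [CompleteSpace E] [IsProbabilityMeasure μ]
    {f g : X → E} {v : E} {lam L : ℝ} (hlam : 0 < lam) (hL : 0 ≤ L)
    (hf : Integrable f μ) (hg : MemLp g 2 μ) (hfg : ∀ x, ‖f x‖ ≤ L * ‖g x‖)
    (hmono : ∀ x, lam * ‖g x‖ ^ 2 ≤ ⟪f x, g x⟫_ℝ)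
    (htest : ∫ x, ⟪f x, g x⟫_ℝ ∂μ = ⟪∫ x, f x ∂μ, v⟫_ℝ) :
    √(∫ x, ‖g x‖ ^ 2 ∂μ) ≤ L / lam * ‖v‖ := by
  set S := √(∫ x, ‖g x‖ ^ 2 ∂μ)
  have hS_sq : S ^ 2 = ∫ x, ‖g x‖ ^ 2 ∂μ := Real.sq_sqrt (integral_nonneg fun _ => sq_nonneg _)
  refine le_div_mul_of_mul_sq_le hlam hL (Real.sqrt_nonneg _) (norm_nonneg v) ?_
  calc lam * S ^ 2 = ∫ x, lam * ‖g x‖ ^ 2 ∂μ := by rw [hS_sq, integral_const_mul]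
    _ ≤ ∫ x, ⟪f x, g x⟫_ℝ ∂μ :=
        integral_mono (hg.norm.integrable_sq.const_mul lam)
          (integrable_inner_of_norm_le hf.aestronglyMeasurable hg hfg) hmono
    _ = ⟪∫ x, f x ∂μ, v⟫_ℝ := htest
    _ ≤ ‖∫ x, f x ∂μ‖ * ‖v‖ := real_inner_le_norm _ _
    _ ≤ L * S * ‖v‖ := by
        gcongr; exact norm_integral_le_mul_sqrt_integral_norm_sq hL hf hg hfg

lemma integral_norm_add_const_sq [CompleteSpace E] [IsProbabilityMeasure μ] {e : X → E}
    (he : MemLp e 2 μ) (he_mean : ∫ x, e x ∂μ = 0) (v : E) :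
    ∫ x, ‖e x + v‖ ^ 2 ∂μ = ∫ x, ‖e x‖ ^ 2 ∂μ + ‖v‖ ^ 2 := by
  have he_int : Integrable e μ := he.integrable one_le_two
  have hcross : ∫ x, ⟪e x, v⟫_ℝ ∂μ = 0 := by
    simp_rw [real_inner_comm v]
    rw [integral_inner he_int, he_mean, inner_zero_right]
  have hcross_int : Integrable (fun x => 2 * ⟪e x, v⟫_ℝ) μ := (he_int.inner_const v).const_mul 2
  have hsum_int : Integrable (fun x => ‖e x‖ ^ 2 + 2 * ⟪e x, v⟫_ℝ) μ :=
    he.norm.integrable_sq.add hcross_int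
  simp_rw [norm_add_sq_real]
  rw [integral_add hsum_int (integrable_const _), integral_add he.norm.integrable_sq hcross_int,
    integral_const_mul, hcross]
  simp

lemma integral_inner_add_const_eq [CompleteSpace E] {f e : X → E} {v : E} (hf : Integrable f μ)
    (hfg : Integrable (fun x => ⟪f x, e x + v⟫_ℝ) μ) (horth : ∫ x, ⟪f x, e x⟫_ℝ ∂μ = 0) :
    ∫ x, ⟪f x, e x + v⟫_ℝ ∂μ = ⟪∫ x, f x ∂μ, v⟫_ℝ := by
  have hsplit : ∫ x, ⟪f x, e x + v⟫_ℝ ∂μ - ∫ x, ⟪f x, v⟫_ℝ ∂μ = 0 := by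
    rw [← integral_sub hfg (hf.inner_const v)]
    simpa only [← inner_sub_right, add_sub_cancel_right] using horth
  rw [sub_eq_zero.1 hsplit]
  simp_rw [real_inner_comm v]
  exact integral_inner hf v

lemma norm_integral_le_and_sqrt_integral_norm_sq_le [CompleteSpace E] [IsProbabilityMeasure μ]
    {f e : X → E} {v : E} {lam L : ℝ} (hlam : 0 < lam) (hL : 0 ≤ L)
    (hf : Integrable f μ) (he : MemLp e 2 μ) (he_mean : ∫ x, e x ∂μ = 0)
    (hfe : ∀ x, ‖f x‖ ≤ L * ‖e x + v‖) (hmono : ∀ x, lam * ‖e x + v‖ ^ 2 ≤ ⟪f x, e x + v⟫_ℝ)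
    (horth : ∫ x, ⟪f x, e x⟫_ℝ ∂μ = 0) :
    ‖∫ x, f x ∂μ‖ ≤ L ^ 2 / lam * ‖v‖ ∧ √(∫ x, ‖e x‖ ^ 2 ∂μ) ≤ L / lam * ‖v‖ := by
  have hg : MemLp (fun x => e x + v) 2 μ := he.add (memLp_const v)
  have hS := sqrt_integral_norm_sq_le_of_strongly_monotone hlam hL hf hg hfe hmono
    (integral_inner_add_const_eq hf (integrable_inner_of_norm_le hf.1 hg hfe) horth)
  constructor
  · calc ‖∫ x, f x ∂μ‖ ≤ L * √(∫ x, ‖e x + v‖ ^ 2 ∂μ) :=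
          norm_integral_le_mul_sqrt_integral_norm_sq hL hf hg hfe
      _ ≤ L * (L / lam * ‖v‖) := by gcongr
      _ = L ^ 2 / lam * ‖v‖ := by ring
  · calc √(∫ x, ‖e x‖ ^ 2 ∂μ) ≤ √(∫ x, ‖e x + v‖ ^ 2 ∂μ) := by
          rw [integral_norm_add_const_sq he he_mean]
          exact Real.sqrt_le_sqrt (le_add_of_nonneg_right (sq_nonneg _))
      _ ≤ L / lam * ‖v‖ := hS

end

theorem stmt_12_general (d : ℕ)
    {X : Type*} [MeasurableSpace X] (μ : Measure X) [IsProbabilityMeasure μ]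
    (lam L : ℝ) (hlam : 0 < lam) (hL : 0 < L)
    (a : EuclideanSpace ℝ (Fin d) → X → EuclideanSpace ℝ (Fin d))
    (hmono : ∀ x p q, lam * ‖p - q‖ ^ 2 ≤ ⟪a p x - a q x, p - q⟫_ℝ)
    (hlip : ∀ x p q, ‖a p x - a q x‖ ≤ L * ‖p - q‖)
    (w : EuclideanSpace ℝ (Fin d) → X → EuclideanSpace ℝ (Fin d))
    (hw2 : ∀ p, MemLp (w p) 2 μ)
    (hwmean : ∀ p, ∫ x, w p x ∂μ = 0)
    (hint : ∀ p, Integrable (fun x => a (w p x + p) x) μ)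
    (horth : ∀ p q,
      ∫ x, ⟪a (w p x + p) x - a (w q x + q) x, w p x - w q x⟫_ℝ ∂μ = 0)
    (abar : EuclideanSpace ℝ (Fin d) → EuclideanSpace ℝ (Fin d))
    (habar : ∀ p, abar p = ∫ x, a (w p x + p) x ∂μ) :
    ∃ C : ℝ, 0 < C ∧ ∀ p q,
      ‖abar p - abar q‖ ≤ C * ‖p - q‖ ∧
      (∫ x, ‖w p x - w q x‖ ^ 2 ∂μ) ^ ((1:ℝ)/2) ≤ C * ‖p - q‖ := by
  refine ⟨L ^ 2 / lam + L / lam, by positivity, fun p q => ?_⟩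
  have hint_sub : Integrable (fun x => a (w p x + p) x - a (w q x + q) x) μ :=
    (hint p).sub (hint q)
  have hw_mean : ∫ x, w p x - w q x ∂μ = 0 := by
    rw [integral_sub ((hw2 p).integrable one_le_two) ((hw2 q).integrable one_le_two), hwmean,
      hwmean, sub_zero]
  have hshift : ∀ x, w p x - w q x + (p - q) = (w p x + p) - (w q x + q) := fun x => by abel
  obtain ⟨habar_le, hw_le⟩ := norm_integral_le_and_sqrt_integral_norm_sq_le
    (e := fun x => w p x - w q x) (v := p - q) hlam hL.le hint_sub ((hw2 p).sub (hw2 q)) hw_mean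
    (fun x => by rw [hshift]; exact hlip _ _ _) (fun x => by rw [hshift]; exact hmono _ _ _)
    (horth p q)
  rw [integral_sub (hint p) (hint q), ← habar, ← habar] at habar_le
  rw [← Real.sqrt_eq_rpow]
  exact ⟨habar_le.trans (by gcongr; exact le_add_of_nonneg_right (by positivity)),
    hw_le.trans (by gcongr; exact le_add_of_nonneg_left (by positivity))⟩

theorem stmt_12 (d : ℕ) (hd : 1 ≤ d)
    {X : Type*} [MeasurableSpace X] (μ : Measure X) [IsProbabilityMeasure μ]
    (lam L : ℝ) (hlam : 0 < lam) (hL : 0 < L)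
    (a : EuclideanSpace ℝ (Fin d) → X → EuclideanSpace ℝ (Fin d))
    (hmeas : ∀ p, Measurable (a p))
    (hmono : ∀ x p q, lam * ‖p - q‖ ^ 2 ≤ ⟪a p x - a q x, p - q⟫_ℝ)
    (hlip : ∀ x p q, ‖a p x - a q x‖ ≤ L * ‖p - q‖)
    (w : EuclideanSpace ℝ (Fin d) → X → EuclideanSpace ℝ (Fin d))
    (hw2 : ∀ p, MemLp (w p) 2 μ)
    (hwmean : ∀ p, ∫ x, w p x ∂μ = 0)
    (hint : ∀ p, Integrable (fun x => a (w p x + p) x) μ)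
    (horth : ∀ p q,
      ∫ x, ⟪a (w p x + p) x - a (w q x + q) x, w p x - w q x⟫_ℝ ∂μ = 0)
    (abar : EuclideanSpace ℝ (Fin d) → EuclideanSpace ℝ (Fin d))
    (habar : ∀ p, abar p = ∫ x, a (w p x + p) x ∂μ) :
    ∃ C : ℝ, 0 < C ∧ ∀ p q,
      ‖abar p - abar q‖ ≤ C * ‖p - q‖ ∧
      (∫ x, ‖w p x - w q x‖ ^ 2 ∂μ) ^ ((1:ℝ)/2) ≤ C * ‖p - q‖ :=
  stmt_12_general d μ lam L hlam hL a hmono hlip w hw2 hwmean hint horth abar habar
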